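/- arXiv:1211.2618 — 5 statements merged into one kernel-verified Lean document; each statement's English description precedes it below -/
import Mathlib

section
/- Let n and p be natural numbers with 1 ≤ p ≤ n. Every multiset s of positive natural numbers with exactly p elements and sum n can be reached from the distinguished partition λ₁ by a finite (possibly empty) sequence of D-steps; that is, the pair (λ₁, s) lies in the reflexive–transitive closure of the D-step relation on multisets. -/
/-- A D-step on multisets of natural numbers: remove one copy each of `a` and `b`
(with `a ≥ b + 2`) and add one copy each of `a - 1` and `b + 1`. -/
def DStep (s t : Multiset ℕ) : Prop :=
  ∃ a b : ℕ, a ∈ s ∧ b ∈ s.erase a ∧ b + 2 ≤ a ∧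
    t = (a - 1) ::ₘ (b + 1) ::ₘ ((s.erase a).erase b)

/-- The distinguished partition `λ₁ = (n - p + 1, 1, …, 1)` with `p - 1` ones. -/
def lambdaOne (n p : ℕ) : Multiset ℕ :=
  (n - p + 1) ::ₘ Multiset.replicate (p - 1) 1

private def msq (s : Multiset ℕ) : ℕ := (s.map fun a => a * a).sum

private lemma msq_le_sq (s : Multiset ℕ) : msq s ≤ s.sum * s.sum := by
  induction s using Multiset.induction with
  | empty => simp [msq]
  | cons a s ih =>
    simp only [msq, Multiset.map_cons, Multiset.sum_cons] at *
    have h : (a + s.sum) * (a + s.sum) = a * a + 2 * (a * s.sum) + s.sum * s.sum := by ring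
    rw [h]
    linarith [ih, Nat.zero_le (a * s.sum)]

private lemma key (n p : ℕ) (hp : 1 ≤ p) (hpn : p ≤ n)
    (s : Multiset ℕ) (hpos : ∀ a ∈ s, 0 < a)
    (hcard : Multiset.card s = p) (hsum : s.sum = n) :
    s = lambdaOne n p ∨ ∃ t : Multiset ℕ, DStep t s ∧ (∀ a ∈ t, 0 < a) ∧
      Multiset.card t = p ∧ t.sum = n ∧ msq s + 2 ≤ msq t := by
  set s₂ := s.filter (fun a => 2 ≤ a) with hs₂
  by_cases hc : 2 ≤ Multiset.card s₂
  · -- step case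
    right
    have h0 : s₂ ≠ 0 := by
      intro h; rw [h] at hc; simp at hc
    obtain ⟨x0, hx0⟩ := Multiset.exists_mem_of_ne_zero h0
    have h1 : s₂.erase x0 ≠ 0 := by
      intro h
      have := Multiset.card_erase_of_mem hx0
      rw [h] at this; simp at this; omega
    obtain ⟨y0, hy0⟩ := Multiset.exists_mem_of_ne_zero h1
    have hx2 : 2 ≤ x0 := (Multiset.mem_filter.1 hx0).2
    have hy0s : y0 ∈ s₂ := Multiset.mem_of_mem_erase hy0
    have hy2' : 2 ≤ y0 := (Multiset.mem_filter.1 hy0s).2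
    have hx0s : x0 ∈ s := (Multiset.mem_filter.1 hx0).1
    have hy0ex : y0 ∈ s.erase x0 :=
      Multiset.mem_of_le (Multiset.erase_le_erase x0 (Multiset.filter_le _ s)) hy0
    obtain ⟨x, z, hyx, hxs, hyex⟩ :
        ∃ x z : ℕ, z + 2 ≤ x ∧ x ∈ s ∧ z + 2 ∈ s.erase x := by
      rcases le_total y0 x0 with h | h
      · exact ⟨x0, y0 - 2, by omega, hx0s, by rw [show y0 - 2 + 2 = y0 by omega]; exact hy0ex⟩
      · rcases eq_or_ne x0 y0 with rfl | hne
        · exact ⟨x0, x0 - 2, by omega, hx0s, by rw [show x0 - 2 + 2 = x0 by omega]; exact hy0ex⟩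
        · refine ⟨y0, x0 - 2, by omega, (Multiset.mem_filter.1 hy0s).1, ?_⟩
          rw [show x0 - 2 + 2 = x0 by omega]
          exact (Multiset.mem_erase_of_ne hne).2 hx0s
    set r := (s.erase x).erase (z + 2) with hr
    have hsplit : s = x ::ₘ (z + 2) ::ₘ r := by
      rw [hr, Multiset.cons_erase hyex, Multiset.cons_erase hxs]
    refine ⟨(x + 1) ::ₘ (z + 1) ::ₘ r, ?_, ?_, ?_, ?_, ?_⟩
    · refine ⟨x + 1, z + 1, Multiset.mem_cons_self _ _, ?_, by omega, ?_⟩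
      · rw [Multiset.erase_cons_head]; exact Multiset.mem_cons_self _ _
      · rw [Multiset.erase_cons_head, Multiset.erase_cons_head]
        have h1 : x + 1 - 1 = x := by omega
        have h2 : z + 1 + 1 = z + 2 := by omega
        rw [h1, h2, ← hsplit]
    · intro a ha
      rcases Multiset.mem_cons.1 ha with rfl | ha
      · omega
      rcases Multiset.mem_cons.1 ha with rfl | ha
      · omega
      · exact hpos a (hsplit ▸ Multiset.mem_cons_of_mem (Multiset.mem_cons_of_mem ha))
    · have := hcard
      rw [hsplit] at this
      simpa using this
    · have := hsum
      rw [hsplit] at this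
      simp only [Multiset.sum_cons] at this ⊢
      omega
    · have hs' : msq s = x * x + (z + 2) * (z + 2) + msq r := by
        rw [hsplit]; simp [msq, Multiset.sum_cons]; ring
      have ht' : msq ((x + 1) ::ₘ (z + 1) ::ₘ r)
          = (x + 1) * (x + 1) + (z + 1) * (z + 1) + msq r := by
        simp [msq, Multiset.sum_cons]; ring
      rw [hs', ht']
      nlinarith [hyx]
  · -- base case: s = lambdaOne n p
    left
    push_neg at hc
    interval_cases h : Multiset.card s₂
    · -- all elements are 1
      have hall : ∀ a ∈ s, a = 1 := by
        intro a ha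
        have hpa := hpos a ha
        by_contra hne
        have h2 : 2 ≤ a := by omega
        have hmem : a ∈ s₂ := Multiset.mem_filter.2 ⟨ha, h2⟩
        have hne0 : Multiset.card s₂ ≠ 0 := by
          intro h0
          rw [Multiset.card_eq_zero] at h0
          rw [h0] at hmem
          simp at hmem
        omega
      have hrep : s = Multiset.replicate p 1 :=
        Multiset.eq_replicate.2 ⟨hcard, hall⟩
      have hn : n = p := by
        rw [hrep] at hsum; simp at hsum; omega
      rw [hrep, lambdaOne, hn]
      have : p - p + 1 = 1 := by omega
      rw [this]
      conv_lhs => rw [show p = (p - 1) + 1 by omega]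
      rw [Multiset.replicate_succ]
    · -- exactly one element ≥ 2
      obtain ⟨m, hm⟩ := Multiset.card_eq_one.1 h
      have hms₂ : m ∈ s₂ := by rw [hm]; simp
      have hm2 : 2 ≤ m := (Multiset.mem_filter.1 hms₂).2
      have hms : m ∈ s := (Multiset.mem_filter.1 hms₂).1
      have hrest : ∀ a ∈ s.erase m, a = 1 := by
        intro a ha
        have has : a ∈ s := Multiset.mem_of_mem_erase ha
        have hpa := hpos a has
        by_contra hne
        have h2 : 2 ≤ a := by omega
        rcases eq_or_ne a m with rfl | hne'
        · have hc2 : 2 ≤ Multiset.count a s := by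
            have h1 : 0 < Multiset.count a (s.erase a) := Multiset.count_pos.2 ha
            rw [Multiset.count_erase_self] at h1
            omega
          have hcf : Multiset.count a s₂ = Multiset.count a s := by
            rw [hs₂, Multiset.count_filter_of_pos h2]
          have := Multiset.count_le_card a s₂
          omega
        · have : a ∈ s₂ := Multiset.mem_filter.2 ⟨has, h2⟩
          rw [hm, Multiset.mem_singleton] at this
          exact hne' this
      have hcardr : Multiset.card (s.erase m) = p - 1 := by
        rw [Multiset.card_erase_of_mem hms, hcard]
        rfl
      have hrep : s.erase m = Multiset.replicate (p - 1) 1 :=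
        Multiset.eq_replicate.2 ⟨hcardr, hrest⟩
      have hsplit : s = m ::ₘ Multiset.replicate (p - 1) 1 := by
        rw [← hrep, Multiset.cons_erase hms]
      have hmn : m = n - p + 1 := by
        rw [hsplit] at hsum
        simp [Multiset.sum_cons] at hsum
        omega
      rw [hsplit, lambdaOne, hmn]

private lemma aux (n p : ℕ) (hp : 1 ≤ p) (hpn : p ≤ n) :
    ∀ k s, (∀ a ∈ s, 0 < a) → Multiset.card s = p → s.sum = n →
      n * n ≤ msq s + k →
      Relation.ReflTransGen DStep (lambdaOne n p) s := by
  intro k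
  induction k with
  | zero =>
    intro s hpos hcard hsum hfuel
    rcases key n p hp hpn s hpos hcard hsum with h | ⟨t, _, _, _, htsum, hlt⟩
    · rw [h]
    · have := msq_le_sq t
      rw [htsum] at this
      omega
  | succ k ih =>
    intro s hpos hcard hsum hfuel
    rcases key n p hp hpn s hpos hcard hsum with h | ⟨t, hd, htpos, htcard, htsum, hlt⟩
    · rw [h]
    · exact (ih t htpos htcard htsum (by omega)).tail hd

theorem partition_descent (n p : ℕ) (hp : 1 ≤ p) (hpn : p ≤ n)
    (s : Multiset ℕ) (hpos : ∀ a ∈ s, 0 < a)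
    (hcard : Multiset.card s = p) (hsum : s.sum = n) :
    Relation.ReflTransGen DStep (lambdaOne n p) s := by
  exact aux n p hp hpn (n * n) s hpos hcard hsum (by omega)
end

section
/- Let n and p be natural numbers with 1 ≤ p ≤ n, and let s be a multiset of positive natural numbers with exactly p elements and sum n. Then the sum of the squares of the elements of s is at most (n − p + 1)² + (p − 1). -/
lemma card_le_sum_of_pos (s : Multiset ℕ) (hpos : ∀ a ∈ s, 0 < a) :
    Multiset.card s ≤ s.sum := by
  induction s using Multiset.induction with
  | empty => simp
  | cons a s ih =>
    simp only [Multiset.card_cons, Multiset.sum_cons]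
    have ha : 0 < a := hpos a (Multiset.mem_cons_self a s)
    have := ih (fun b hb => hpos b (Multiset.mem_cons_of_mem hb))
    omega

theorem sum_sq_le_of_partition (n p : ℕ) (hp : 1 ≤ p) (hpn : p ≤ n)
    (s : Multiset ℕ) (hpos : ∀ a ∈ s, 0 < a)
    (hcard : Multiset.card s = p) (hsum : s.sum = n) :
    (s.map (fun x => x ^ 2)).sum ≤ (n - p + 1) ^ 2 + (p - 1) := by
  induction s using Multiset.induction generalizing n p with
  | empty => simp at hcard; omega
  | cons a s ih =>
    have ha : 0 < a := hpos a (Multiset.mem_cons_self a s)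
    have hpos' : ∀ b ∈ s, 0 < b := fun b hb => hpos b (Multiset.mem_cons_of_mem hb)
    simp only [Multiset.card_cons, Multiset.sum_cons, Multiset.map_cons] at *
    by_cases hs : s = 0
    · subst hs
      simp at hcard hsum ⊢
      subst hsum
      have hn : a - p + 1 = a := by omega
      rw [hn]
      exact Nat.le_add_right _ _
    · have hcard' : 1 ≤ Multiset.card s := Multiset.card_pos.mpr hs
      have hcs : Multiset.card s ≤ s.sum := card_le_sum_of_pos s hpos'
      have hih := ih s.sum (Multiset.card s) hcard' hcs hpos' rfl rfl
      -- introduce variables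
      obtain ⟨b, rfl⟩ : ∃ b, a = b + 1 := ⟨a - 1, by omega⟩
      obtain ⟨q, hq⟩ : ∃ q, Multiset.card s = q + 1 := ⟨Multiset.card s - 1, by omega⟩
      obtain ⟨u, hu⟩ : ∃ u, s.sum = u + (q + 1) := ⟨s.sum - (q+1), by omega⟩
      subst hcard hsum
      rw [hq, hu] at hih ⊢
      have h1 : u + (q + 1) - (q + 1) + 1 = u + 1 := by omega
      have h2 : b + 1 + (u + (q + 1)) - (q + 1 + 1) + 1 = b + u + 1 := by omega
      rw [h1] at hih
      rw [h2]
      have h3 : q + 1 - 1 = q := by omega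
      have h4 : q + 1 + 1 - 1 = q + 1 := by omega
      rw [h3] at hih
      rw [h4]
      nlinarith [hih, Nat.zero_le (b * u)]
end

section
/- Let n and p be natural numbers with 1 ≤ p ≤ n, and let λ₁ be the multiset consisting of one copy of n − p + 1 and p − 1 copies of 1. Then: (i) λ₁ has exactly p elements and sum n; (ii) ∑_{a ∈ λ₁} a·(a − 1) = (n − p + 1)·(n − p); and (iii) for every multiset s of positive natural numbers with exactly p elements and sum n, ∑_{a ∈ s} a·(a − 1) ≤ (n − p + 1)·(n − p). -/
theorem lambdaOne_maximizes_sum_mul_pred (n p : ℕ) (hp : 1 ≤ p) (hpn : p ≤ n) :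
    (Multiset.card (lambdaOne n p) = p ∧ (lambdaOne n p).sum = n) ∧
    ((lambdaOne n p).map (fun a => a * (a - 1))).sum = (n - p + 1) * (n - p) ∧
    ∀ s : Multiset ℕ, (∀ a ∈ s, 0 < a) → Multiset.card s = p → s.sum = n →
      (s.map (fun a => a * (a - 1))).sum ≤ (n - p + 1) * (n - p) := by
  refine ⟨⟨?_, ?_⟩, ?_, ?_⟩
  · simp [lambdaOne]; omega
  · simp [lambdaOne, Multiset.sum_replicate]; omega
  · simp [lambdaOne, Multiset.sum_replicate]
  · intro s hpos hcard hsum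
    -- each element is ≤ n - p + 1
    have hle : ∀ a ∈ s, a ≤ n - p + 1 := by
      intro a ha
      have hc : Multiset.card (s.erase a) = p - 1 := by
        rw [Multiset.card_erase_of_mem ha, hcard]; rfl
      have hs' : a + (s.erase a).sum = n := by
        rw [← Multiset.sum_cons, Multiset.cons_erase ha, hsum]
      have hge : p - 1 ≤ (s.erase a).sum := by
        calc p - 1 = Multiset.card (s.erase a) := hc.symm
        _ = Multiset.card (s.erase a) • 1 := by simp
        _ ≤ (s.erase a).sum := Multiset.card_nsmul_le_sum fun x hx =>
            hpos x (Multiset.mem_of_mem_erase hx)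
      omega
    have hsub : (s.map (fun a => a - 1)).sum = n - p := by
      have : (s.map (fun a => a - 1)).sum + p = n := by
        calc (s.map (fun a => a - 1)).sum + p
            = (s.map (fun a => a - 1)).sum + Multiset.card s := by rw [hcard]
          _ = (s.map (fun a => (a - 1) + 1)).sum := by
              rw [Multiset.sum_map_add]; simp
          _ = (s.map id).sum := by
              apply congrArg
              apply Multiset.map_congr rfl
              intro a ha
              have h1 := hpos a ha
              simp only [id_eq]
              omega
          _ = n := by simp [hsum]
      omega
    calc (s.map (fun a => a * (a - 1))).sum
        ≤ (s.map (fun a => (n - p + 1) * (a - 1))).sum := by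
          apply Multiset.sum_map_le_sum_map
          intro a ha
          exact Nat.mul_le_mul_right _ (hle a ha)
      _ = (n - p + 1) * (n - p) := by
          rw [Multiset.sum_map_mul_left, hsub]
end

section
/- Let s be a multiset of positive natural numbers and let a, b be natural numbers with a ∈ s, b ∈ s.erase a and a ≥ b + 2. Let t be the multiset obtained from s by removing one copy each of a and b and adding one copy each of a − 1 and b + 1. Then the list of elements of t sorted in non-increasing order is strictly smaller, in the lexicographic order on lists of natural numbers, than the list of elements of s sorted in non-increasing order. -/
/-!
Weigh a list of parts by `∑ B ^ part`, for a base `B` larger than the number of parts.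
A D-step trades `B ^ a + B ^ b` for the smaller `B ^ (a - 1) + B ^ (b + 1)`. On a
non-increasing list the largest part outweighs all the others together,
`∑ B ^ yᵢ < B ^ (y₀ + 1)`, so a smaller weight forces a lexicographically smaller list.
-/

lemma sum_map_pow_lt_pow_succ {B b : ℕ} {y : List ℕ} (hy : ∀ c ∈ y, c ≤ b)
    (hB : y.length < B) : (y.map (B ^ ·)).sum < B ^ (b + 1) := by
  have hle : ∀ z ∈ y.map (B ^ ·), z ≤ B ^ b := by
    simp only [List.mem_map]
    rintro _ ⟨c, hc, rfl⟩
    exact Nat.pow_le_pow_right (by omega) (hy c hc)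
  calc (y.map (B ^ ·)).sum ≤ y.length * B ^ b := by
        simpa using List.sum_le_card_nsmul _ _ hle
    _ < B * B ^ b := Nat.mul_lt_mul_of_pos_right hB (pow_pos (by omega) _)
    _ = B ^ (b + 1) := by ring

lemma lex_lt_of_sum_map_pow_lt {B : ℕ} : ∀ {x y : List ℕ}, y.Pairwise (· ≥ ·) →
    y.length < B → (x.map (B ^ ·)).sum < (y.map (B ^ ·)).sum → List.Lex (· < ·) x y
  | [], [], _, _, h => absurd h (lt_irrefl 0)
  | [], _ :: _, _, _, _ => .nil
  | _ :: _, [], _, _, h => absurd h (Nat.not_lt_zero _)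
  | a :: x, b :: y, hy, hB, h => by
    rcases lt_trichotomy a b with hab | rfl | hba
    · exact .rel hab
    · exact .cons (lex_lt_of_sum_map_pow_lt hy.of_cons (Nat.lt_of_succ_lt hB) (by simpa using h))
    · have hyb : ∀ c ∈ b :: y, c ≤ b := fun c hc =>
        (List.mem_cons.1 hc).elim (·.le) (List.rel_of_pairwise_cons hy)
      refine absurd h (lt_asymm ?_)
      calc ((b :: y).map (B ^ ·)).sum < B ^ (b + 1) := sum_map_pow_lt_pow_succ hyb hB
        _ ≤ B ^ a := Nat.pow_le_pow_right (by omega) hba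
        _ ≤ ((a :: x).map (B ^ ·)).sum := by simp

lemma pow_pred_add_pow_succ_lt {B a b : ℕ} (hB : 2 ≤ B) (hab : b + 2 ≤ a) :
    B ^ (a - 1) + B ^ (b + 1) < B ^ a + B ^ b := by
  obtain ⟨c, rfl⟩ : ∃ c, a = c + 1 := ⟨a - 1, by omega⟩
  have hbc : B ^ (b + 1) ≤ B ^ c := Nat.pow_le_pow_right (by omega) (by omega)
  have hc : 2 * B ^ c ≤ B ^ (c + 1) := by
    rw [pow_succ']
    exact Nat.mul_le_mul_right _ hB
  have hb : 0 < B ^ b := by positivity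
  rw [Nat.add_sub_cancel]
  omega

lemma Multiset.sum_map_sort {α : Type*} (s : Multiset α) (r : α → α → Prop) [DecidableRel r]
    [IsTrans α r] [Std.Antisymm r] [Std.Total r] (f : α → ℕ) :
    ((s.sort r).map f).sum = (s.map f).sum := by
  rw [← Multiset.sum_coe, ← Multiset.map_coe, Multiset.sort_eq]

theorem dstep_lex_decreasing_general (s : Multiset ℕ)
    (a b : ℕ) (ha : a ∈ s) (hb : b ∈ s.erase a) (hab : b + 2 ≤ a)
    (t : Multiset ℕ)
    (ht : t = (a - 1) ::ₘ (b + 1) ::ₘ ((s.erase a).erase b)) :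
    List.Lex (· < ·) (Multiset.sort t (· ≥ ·)) (Multiset.sort s (· ≥ ·)) := by
  set r := (s.erase a).erase b
  have hs : s = a ::ₘ b ::ₘ r := by
    rw [Multiset.cons_erase hb, Multiset.cons_erase ha]
  have hcard : 0 < s.card := Multiset.card_pos_iff_exists_mem.2 ⟨a, ha⟩
  obtain ⟨B, hsB, hB⟩ : ∃ B, s.card < B ∧ 2 ≤ B := ⟨s.card + 1, by omega, by omega⟩
  refine lex_lt_of_sum_map_pow_lt (Multiset.pairwise_sort _ _) (by simpa using hsB) ?_
  have hweight := pow_pred_add_pow_succ_lt hB hab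
  rw [Multiset.sum_map_sort, Multiset.sum_map_sort, ht, hs]
  simp only [Multiset.map_cons, Multiset.sum_cons]
  omega

theorem dstep_lex_decreasing (s : Multiset ℕ) (hpos : ∀ x ∈ s, 0 < x)
    (a b : ℕ) (ha : a ∈ s) (hb : b ∈ s.erase a) (hab : b + 2 ≤ a)
    (t : Multiset ℕ)
    (ht : t = (a - 1) ::ₘ (b + 1) ::ₘ ((s.erase a).erase b)) :
    List.Lex (· < ·) (Multiset.sort t (· ≥ ·)) (Multiset.sort s (· ≥ ·)) :=
  dstep_lex_decreasing_general s a b ha hb hab t ht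
end

section
/- Let G be a simple graph that is acyclic, let v be a vertex of G, and let w be a closed walk in G from v to v. Then for every dart d of G (an edge together with a chosen direction), the number of occurrences of d in the list of darts of w equals the number of occurrences of the reversed dart of d in the list of darts of w. -/
/-!
Every edge `e` of an acyclic graph is a bridge, so deleting it splits the vertices into the side
of the head of a dart `d` along `e` and the rest. A walk changes side exactly when it traverses `d`
(entering the head side) or `d.symm` (leaving it); a closed walk ends on the side it started from,
so it enters and leaves equally often.
-/

namespace SimpleGraph

variable {V : Type*} {G : SimpleGraph V}

open Classical in
noncomputable def Dart.headSideIndicator (d : G.Dart) (y : V) : ℕ :=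
  if (G.deleteEdges {d.edge}).Reachable d.snd y then 1 else 0

namespace Dart

variable (d : G.Dart)

lemma headSideIndicator_snd : d.headSideIndicator d.snd = 1 :=
  if_pos .rfl

lemma headSideIndicator_fst_of_isBridge (hd : G.IsBridge d.edge) :
    d.headSideIndicator d.fst = 0 :=
  if_neg fun h ↦ (isBridge_iff.mp hd) h.symm

lemma headSideIndicator_fst_eq_snd_of_edge_ne {d' : G.Dart} (h : d'.edge ≠ d.edge) :
    d.headSideIndicator d'.fst = d.headSideIndicator d'.snd := by
  have hadj : (G.deleteEdges {d.edge}).Adj d'.fst d'.snd :=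
    (deleteEdges_adj ..).mpr ⟨d'.adj, h⟩
  have hside : (G.deleteEdges {d.edge}).Reachable d.snd d'.fst ↔
      (G.deleteEdges {d.edge}).Reachable d.snd d'.snd :=
    ⟨(·.trans hadj.reachable), (·.trans hadj.symm.reachable)⟩
  unfold headSideIndicator
  split_ifs <;> tauto

lemma headSideIndicator_fst_add_ite_eq [DecidableEq V] (hd : G.IsBridge d.edge) (d' : G.Dart) :
    d.headSideIndicator d'.fst + (if d' = d then 1 else 0) =
      d.headSideIndicator d'.snd + (if d' = d.symm then 1 else 0) := by
  by_cases h : d' = d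
  · subst h
    simp [headSideIndicator_fst_of_isBridge, headSideIndicator_snd, hd, d'.symm_ne.symm]
  by_cases h' : d' = d.symm
  · subst h'
    simp [headSideIndicator_fst_of_isBridge, headSideIndicator_snd, hd, d.symm_ne]
  have hedge : d'.edge ≠ d.edge := by simp [dart_edge_eq_iff, h, h']
  simp [h, h', headSideIndicator_fst_eq_snd_of_edge_ne d hedge]

end Dart

variable [DecidableEq V] {d : G.Dart}

lemma Walk.count_darts_add_headSideIndicator (hd : G.IsBridge d.edge) {u x : V} (p : G.Walk u x) :
    p.darts.count d + d.headSideIndicator u = p.darts.count d.symm + d.headSideIndicator x := by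
  induction p with
  | nil => rfl
  | cons hadj p ih =>
    have := d.headSideIndicator_fst_add_ite_eq hd ⟨(_, _), hadj⟩
    simp only [darts_cons, List.count_cons, beq_iff_eq] at this ⊢
    omega

lemma IsBridge.count_darts_eq_count_darts_symm (hd : G.IsBridge d.edge) {v : V}
    (w : G.Walk v v) : w.darts.count d = w.darts.count d.symm := by
  have := w.count_darts_add_headSideIndicator hd
  omega

end SimpleGraph

theorem closed_walk_darts_count_symm_of_acyclic {V : Type*} [DecidableEq V]
    (G : SimpleGraph V) (hG : G.IsAcyclic) (v : V) (w : G.Walk v v)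
    (d : G.Dart) :
    w.darts.count d = w.darts.count d.symm :=
  (SimpleGraph.isAcyclic_iff_forall_isBridge.mp hG d.edge_mem).count_darts_eq_count_darts_symm w
end
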